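/- arXiv:2208.05409 — 4 statements merged into one kernel-verified Lean document; each statement's English description precedes it below -/
import Mathlib

section
/- For every fractional O-ideal I = I_1 ⊕ … ⊕ I_n there exists an R-linear isomorphism ψ̃ : Q(O) → Q(I). -/
/-!
Setting: `Z` is a Dedekind domain (not a field) with fraction field `Q`;
`K i` (for `i : Fin n`) are finite field extensions of `Q` and
`K = K₁ ⊕ ⋯ ⊕ Kₙ` is modelled as the product `∀ i, K i`;
`O i = integralClosure Z (K i)` and `O = integralClosure Z (∀ i, K i)`;
`V = K₁^(s 1) ⊕ ⋯ ⊕ Kₙ^(s n)` is modelled as `∀ i, Fin (s i) → K i`,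
a module over `∀ i, K i` with the componentwise diagonal action.
-/

open Submodule

section AuxDedekind

open FractionalIdeal IsDedekindDomain

variable {A : Type} [CommRing A] [IsDomain A] [IsDedekindDomain A]
  {F : Type} [Field F] [Algebra A F] [IsFractionRing A F]



lemma notmem_mul (I : FractionalIdeal (nonZeroDivisors A) F) (hI : I ≠ 0)
    (p : Ideal A) (hp : p.IsMaximal) {c : A} (hc : c ∉ p) {yv : F} (hyv : yv ∈ I)
    (hyp : yv ∉ (p : FractionalIdeal (nonZeroDivisors A) F) * I) :
    algebraMap A F c * yv ∉ (p : FractionalIdeal (nonZeroDivisors A) F) * I := by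
  intro h
  have hinv : I * I⁻¹ = 1 := mul_inv_cancel₀ hI
  have hle1 : spanSingleton (nonZeroDivisors A) yv * I⁻¹ ≤ 1 := by
    calc spanSingleton (nonZeroDivisors A) yv * I⁻¹
        ≤ I * I⁻¹ := mul_le_mul_left (spanSingleton_le_iff_mem.mpr hyv) I⁻¹
      _ = 1 := hinv
  obtain ⟨J₀, hJ₀⟩ := le_one_iff_exists_coeIdeal.mp hle1
  have hspan : (J₀ : FractionalIdeal (nonZeroDivisors A) F) * I
      = spanSingleton (nonZeroDivisors A) yv := by
    rw [hJ₀, mul_assoc, mul_comm I⁻¹ I, hinv, mul_one]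
  have hJnle : ¬ J₀ ≤ p := by
    intro hle
    apply hyp
    have : (J₀ : FractionalIdeal (nonZeroDivisors A) F) * I
        ≤ (p : FractionalIdeal (nonZeroDivisors A) F) * I :=
      mul_le_mul_left (coeIdeal_le_coeIdeal F |>.mpr hle) I
    rw [hspan] at this
    exact this (mem_spanSingleton_self _ yv)
  have hsup : p ⊔ J₀ = ⊤ := by
    by_contra hne
    have := hp.eq_of_le hne le_sup_left
    exact hJnle (this ▸ le_sup_right)
  obtain ⟨b, hb, a, ha, hba⟩ := Submodule.mem_sup.mp (hsup ▸ Submodule.mem_top (x := (1 : A)))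
  have hca : c * a ∈ p := by
    have h1 : algebraMap A F a ∈ (J₀ : FractionalIdeal (nonZeroDivisors A) F) :=
      mem_coeIdeal_of_mem _ ha
    have h2 : algebraMap A F c * algebraMap A F a ∈
        spanSingleton (nonZeroDivisors A) (algebraMap A F c) *
          (J₀ : FractionalIdeal (nonZeroDivisors A) F) :=
      mul_mem_mul (mem_spanSingleton_self _ _) h1
    have h3 : spanSingleton (nonZeroDivisors A) (algebraMap A F c) *
        (J₀ : FractionalIdeal (nonZeroDivisors A) F)
        ≤ (p : FractionalIdeal (nonZeroDivisors A) F) := by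
      have e1 : spanSingleton (nonZeroDivisors A) (algebraMap A F c) *
          ((J₀ : FractionalIdeal (nonZeroDivisors A) F) * I)
          = spanSingleton (nonZeroDivisors A) (algebraMap A F c * yv) := by
        rw [hspan, spanSingleton_mul_spanSingleton]
      have e2 : spanSingleton (nonZeroDivisors A) (algebraMap A F c * yv)
          ≤ (p : FractionalIdeal (nonZeroDivisors A) F) * I :=
        spanSingleton_le_iff_mem.mpr h
      calc spanSingleton (nonZeroDivisors A) (algebraMap A F c) *
            (J₀ : FractionalIdeal (nonZeroDivisors A) F)
          = spanSingleton (nonZeroDivisors A) (algebraMap A F c) *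
            ((J₀ : FractionalIdeal (nonZeroDivisors A) F) * I) * I⁻¹ := by
            rw [mul_assoc, mul_assoc, hinv, mul_one]
        _ = spanSingleton (nonZeroDivisors A) (algebraMap A F c * yv) * I⁻¹ := by rw [e1]
        _ ≤ ((p : FractionalIdeal (nonZeroDivisors A) F) * I) * I⁻¹ := mul_le_mul_left e2 I⁻¹
        _ = (p : FractionalIdeal (nonZeroDivisors A) F) := by rw [mul_assoc, hinv, mul_one]
    have h4 : algebraMap A F (c * a) ∈ (p : FractionalIdeal (nonZeroDivisors A) F) := by
      rw [_root_.map_mul]; exact h3 h2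
    obtain ⟨x, hx, hxe⟩ := (mem_coeIdeal _).mp h4
    rwa [← IsFractionRing.injective A F hxe]
  have : c = c * b + c * a := by rw [← mul_add, hba, mul_one]
  exact hc (this ▸ p.add_mem (Ideal.mul_mem_left _ _ hb) hca)

lemma key (I : FractionalIdeal (nonZeroDivisors A) F) (hI : I ≠ 0) (f : Ideal A) (hf : f ≠ ⊥) :
    ∃ w : F, w ∈ I ∧
      (∀ x ∈ I, ∃ (y : A) (z : F), y ∈ (⊤ : Ideal A) ∧
        z ∈ (f : FractionalIdeal (nonZeroDivisors A) F) * I ∧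
        x = algebraMap A F y * w + z) ∧
      (∀ y : A, algebraMap A F y * w ∈ (f : FractionalIdeal (nonZeroDivisors A) F) * I → y ∈ f) := by
  classical
  have hinv : I * I⁻¹ = 1 := mul_inv_cancel₀ hI
  -- the finitely many primes over f
  have hTfin : {v : HeightOneSpectrum A | f ≤ v.asIdeal}.Finite := by
    refine (Ideal.finite_factors hf).subset ?_
    intro v hv
    exact (Ideal.dvd_iff_le).mpr hv
  set Tf : Finset (HeightOneSpectrum A) := hTfin.toFinset with hTf
  -- pick yᵥ ∈ I \ pᵥ I
  have hy : ∀ v : HeightOneSpectrum A, ∃ y, y ∈ I ∧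
      y ∉ (v.asIdeal : FractionalIdeal (nonZeroDivisors A) F) * I := by
    intro v
    by_contra h
    push_neg at h
    have hle : I ≤ (v.asIdeal : FractionalIdeal (nonZeroDivisors A) F) * I := fun y hy => h y hy
    have hle' : (v.asIdeal : FractionalIdeal (nonZeroDivisors A) F) * I ≤ I := by
      rw [mul_comm]
      simpa using mul_le_mul_right coeIdeal_le_one I
    have heq : (v.asIdeal : FractionalIdeal (nonZeroDivisors A) F) * I = I := le_antisymm hle' hle
    have : (v.asIdeal : FractionalIdeal (nonZeroDivisors A) F) = 1 := by
      calc (v.asIdeal : FractionalIdeal (nonZeroDivisors A) F)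
          = ↑v.asIdeal * (I * I⁻¹) := by rw [hinv, mul_one]
        _ = (↑v.asIdeal * I) * I⁻¹ := by ring
        _ = I * I⁻¹ := by rw [heq]
        _ = 1 := hinv
    have := coeIdeal_eq_one.mp this
    exact v.isPrime.ne_top (by simpa [Ideal.one_eq_top] using this)
  choose y hyI hyp using hy
  -- pick cᵥ ∈ ∏_{u ≠ v} u, cᵥ ∉ v
  have hc : ∀ v ∈ Tf, ∃ c : A, c ∈ ∏ u ∈ Tf.erase v, u.asIdeal ∧ c ∉ v.asIdeal := by
    intro v hv
    by_contra h
    push_neg at h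
    have hle : (∏ u ∈ Tf.erase v, u.asIdeal) ≤ v.asIdeal := fun c hc => h c hc
    obtain ⟨u, hu, hule⟩ := (Ideal.IsPrime.prod_le v.isPrime).mp hle
    have humax : u.asIdeal.IsMaximal := u.isPrime.isMaximal u.ne_bot
    have := humax.eq_of_le v.isPrime.ne_top hule
    have : u = v := HeightOneSpectrum.ext this
    exact (Finset.ne_of_mem_erase hu) this
  choose c hcprod hcnot using hc
  set w : F := ∑ v ∈ Tf.attach, algebraMap A F (c v.1 v.2) * y v.1 with hwdef
  have hwI : w ∈ I := by
    refine Submodule.sum_mem _ ?_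
    intro v _
    rw [← Algebra.smul_def]
    exact Submodule.smul_mem _ _ (hyI v.1)
  have hw : ∀ v ∈ Tf, w ∉ (v.asIdeal : FractionalIdeal (nonZeroDivisors A) F) * I := by
    intro v hv hmem
    have hrest : ∀ u ∈ Tf.attach.erase ⟨v, hv⟩,
        algebraMap A F (c u.1 u.2) * y u.1 ∈
          (v.asIdeal : FractionalIdeal (nonZeroDivisors A) F) * I := by
      intro u hu
      have huv : u.1 ≠ v := by
        intro h
        exact (Finset.ne_of_mem_erase hu) (Subtype.ext h)
      have hvmem : v ∈ Tf.erase u.1 := Finset.mem_erase.mpr ⟨fun h => huv h.symm, hv⟩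
      have hprodle : (∏ u' ∈ Tf.erase u.1, u'.asIdeal) ≤ v.asIdeal := by
        rw [← Finset.mul_prod_erase _ _ hvmem]
        exact Submodule.mul_le.mpr fun a ha b _ => Ideal.mul_mem_right b _ ha
      have hcu : c u.1 u.2 ∈ v.asIdeal := hprodle (hcprod u.1 u.2)
      exact mul_mem_mul (mem_coeIdeal_of_mem _ hcu) (hyI u.1)
    have hsum : w = algebraMap A F (c v hv) * y v +
        ∑ u ∈ Tf.attach.erase ⟨v, hv⟩, algebraMap A F (c u.1 u.2) * y u.1 := by
      rw [hwdef, ← Finset.add_sum_erase _ _ (Finset.mem_attach Tf ⟨v, hv⟩)]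
    have hterm : algebraMap A F (c v hv) * y v ∈
        (v.asIdeal : FractionalIdeal (nonZeroDivisors A) F) * I := by
      have hsmem : (∑ u ∈ Tf.attach.erase ⟨v, hv⟩, algebraMap A F (c u.1 u.2) * y u.1) ∈
          (v.asIdeal : FractionalIdeal (nonZeroDivisors A) F) * I :=
        Submodule.sum_mem _ hrest
      have : algebraMap A F (c v hv) * y v = w -
          ∑ u ∈ Tf.attach.erase ⟨v, hv⟩, algebraMap A F (c u.1 u.2) * y u.1 := by
        rw [hsum]; ring
      rw [this]
      exact Submodule.sub_mem _ hmem hsmem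
    exact notmem_mul I hI v.asIdeal (v.isPrime.isMaximal v.ne_bot) (hcnot v hv) (hyI v)
      (hyp v) hterm
  -- the ideal C₀
  have hX : spanSingleton (nonZeroDivisors A) w + (f : FractionalIdeal (nonZeroDivisors A) F) * I
      ≤ I := by
    refine sup_le (spanSingleton_le_iff_mem.mpr hwI) ?_
    rw [mul_comm]
    simpa using mul_le_mul_right coeIdeal_le_one I
  have hle1 : (spanSingleton (nonZeroDivisors A) w +
      (f : FractionalIdeal (nonZeroDivisors A) F) * I) * I⁻¹ ≤ 1 := by
    calc (spanSingleton (nonZeroDivisors A) w +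
        (f : FractionalIdeal (nonZeroDivisors A) F) * I) * I⁻¹
        ≤ I * I⁻¹ := mul_le_mul_left hX I⁻¹
      _ = 1 := hinv
  obtain ⟨C₀, hC₀⟩ := le_one_iff_exists_coeIdeal.mp hle1
  have hCI : (C₀ : FractionalIdeal (nonZeroDivisors A) F) * I
      = spanSingleton (nonZeroDivisors A) w +
        (f : FractionalIdeal (nonZeroDivisors A) F) * I := by
    rw [hC₀, mul_assoc, mul_comm I⁻¹ I, hinv, mul_one]
  have hfC : f ≤ C₀ := by
    rw [← coeIdeal_le_coeIdeal F]
    calc (f : FractionalIdeal (nonZeroDivisors A) F)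
        = (f : FractionalIdeal (nonZeroDivisors A) F) * I * I⁻¹ := by
          rw [mul_assoc, hinv, mul_one]
      _ ≤ ((C₀ : FractionalIdeal (nonZeroDivisors A) F) * I) * I⁻¹ := by
          refine mul_le_mul_left ?_ I⁻¹
          rw [hCI]
          exact le_sup_right
      _ = (C₀ : FractionalIdeal (nonZeroDivisors A) F) := by rw [mul_assoc, hinv, mul_one]
  have hCtop : C₀ = ⊤ := by
    by_contra hne
    obtain ⟨m, hm, hCm⟩ := Ideal.exists_le_maximal C₀ hne
    have hmne : m ≠ ⊥ := by
      intro hbot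
      exact hf (le_bot_iff.mp (hbot ▸ hfC.trans hCm))
    set v : HeightOneSpectrum A := ⟨m, hm.isPrime, hmne⟩ with hvdef
    have hvT : v ∈ Tf := by
      rw [hTf, Set.Finite.mem_toFinset]
      exact hfC.trans hCm
    refine hw v hvT ?_
    have h1 : w ∈ (C₀ : FractionalIdeal (nonZeroDivisors A) F) * I := by
      rw [hCI]
      exact (le_sup_left :
        spanSingleton (nonZeroDivisors A) w ≤ _) (mem_spanSingleton_self _ w)
    exact mul_le_mul_left ((coeIdeal_le_coeIdeal F).mpr hCm) I h1
  have hIeq : I = spanSingleton (nonZeroDivisors A) w +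
      (f : FractionalIdeal (nonZeroDivisors A) F) * I := by
    rw [← hCI, hCtop]
    simp [Ideal.one_eq_top]
  refine ⟨w, hwI, ?_, ?_⟩
  · intro x hx
    rw [hIeq] at hx
    rw [← FractionalIdeal.mem_coe, FractionalIdeal.coe_add] at hx
    obtain ⟨u, hu, z, hz, rfl⟩ := Submodule.mem_sup.mp hx
    rw [FractionalIdeal.mem_coe] at hu hz
    obtain ⟨t, rfl⟩ := (mem_spanSingleton _).mp hu
    exact ⟨t, z, trivial, hz, by rw [Algebra.smul_def]⟩
  · intro t ht
    have h1 : (1 : FractionalIdeal (nonZeroDivisors A) F)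
        = spanSingleton (nonZeroDivisors A) w * I⁻¹ +
          (f : FractionalIdeal (nonZeroDivisors A) F) := by
      calc (1 : FractionalIdeal (nonZeroDivisors A) F) = I * I⁻¹ := hinv.symm
        _ = (spanSingleton (nonZeroDivisors A) w +
            (f : FractionalIdeal (nonZeroDivisors A) F) * I) * I⁻¹ := by rw [← hIeq]
        _ = spanSingleton (nonZeroDivisors A) w * I⁻¹ +
            (f : FractionalIdeal (nonZeroDivisors A) F) * (I * I⁻¹) := by ring
        _ = spanSingleton (nonZeroDivisors A) w * I⁻¹ +
            (f : FractionalIdeal (nonZeroDivisors A) F) := by rw [hinv, mul_one]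
    have h2 : spanSingleton (nonZeroDivisors A) (algebraMap A F t)
        ≤ (f : FractionalIdeal (nonZeroDivisors A) F) := by
      calc spanSingleton (nonZeroDivisors A) (algebraMap A F t)
          = spanSingleton (nonZeroDivisors A) (algebraMap A F t) * 1 := by rw [mul_one]
        _ = spanSingleton (nonZeroDivisors A) (algebraMap A F t) *
              (spanSingleton (nonZeroDivisors A) w * I⁻¹) +
            spanSingleton (nonZeroDivisors A) (algebraMap A F t) *
              (f : FractionalIdeal (nonZeroDivisors A) F) := by rw [h1]; ring
        _ ≤ (f : FractionalIdeal (nonZeroDivisors A) F) +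
            (f : FractionalIdeal (nonZeroDivisors A) F) := by
            refine sup_le_sup ?_ ?_
            · calc spanSingleton (nonZeroDivisors A) (algebraMap A F t) *
                  (spanSingleton (nonZeroDivisors A) w * I⁻¹)
                  = spanSingleton (nonZeroDivisors A) (algebraMap A F t * w) * I⁻¹ := by
                    rw [← mul_assoc, spanSingleton_mul_spanSingleton]
                _ ≤ ((f : FractionalIdeal (nonZeroDivisors A) F) * I) * I⁻¹ :=
                    mul_le_mul_left (spanSingleton_le_iff_mem.mpr ht) I⁻¹
                _ = (f : FractionalIdeal (nonZeroDivisors A) F) := by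
                    rw [mul_assoc, hinv, mul_one]
            · calc spanSingleton (nonZeroDivisors A) (algebraMap A F t) *
                  (f : FractionalIdeal (nonZeroDivisors A) F)
                  ≤ 1 * (f : FractionalIdeal (nonZeroDivisors A) F) := by
                    refine mul_le_mul_left ?_ _
                    refine spanSingleton_le_iff_mem.mpr ?_
                    exact (mem_one_iff (nonZeroDivisors A)).mpr ⟨t, rfl⟩
                _ = (f : FractionalIdeal (nonZeroDivisors A) F) := one_mul _
        _ = (f : FractionalIdeal (nonZeroDivisors A) F) := sup_idem _
    have h3 : algebraMap A F t ∈ (f : FractionalIdeal (nonZeroDivisors A) F) :=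
      h2 (mem_spanSingleton_self _ _)
    obtain ⟨x, hx, hxe⟩ := (mem_coeIdeal _).mp h3
    rwa [← IsFractionRing.injective A F hxe]

variable (Z : Type) [CommRing Z] [IsDomain Z] [IsDedekindDomain Z]
  (Q : Type) [Field Q] [Algebra Z Q] [IsFractionRing Z Q]
  (Ki : Type) [Field Ki] [Algebra Q Ki] [FiniteDimensional Q Ki]
  [Algebra Z Ki] [IsScalarTower Z Q Ki]

set_option maxHeartbeats 1000000 in
lemma component
    (hAfg : (Subalgebra.toSubmodule (integralClosure Z Ki)).FG)
    (g : Submodule Z Ki)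
    (hgO : ∀ a ∈ g, a ∈ integralClosure Z Ki)
    (hgstab : ∀ r ∈ integralClosure Z Ki, ∀ a ∈ g, r * a ∈ g)
    (hgne : ∃ a ∈ g, a ≠ 0)
    (Ii : Submodule Z Ki) (hfg : Ii.FG) (hsp : Submodule.span Q (Ii : Set Ki) = ⊤)
    (hstab : ∀ r ∈ integralClosure Z Ki, ∀ x ∈ Ii, r * x ∈ Ii) :
    ∃ w ∈ Ii,
      (∀ x ∈ Ii, ∃ b z, b ∈ integralClosure Z Ki ∧ z ∈ g * Ii ∧ x = b * w + z) ∧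
      (∀ b ∈ integralClosure Z Ki, b * w ∈ g * Ii → b ∈ g) := by
  classical
  set AO := integralClosure Z Ki with hAO
  haveI : IsFractionRing ↥AO Ki :=
    integralClosure.isFractionRing_of_finite_extension Q Ki
  haveI : IsNoetherian Z ↥(Subalgebra.toSubmodule AO) :=
    isNoetherian_of_fg_of_noetherian _ hAfg
  haveI hNZ : IsNoetherian Z ↥AO := ‹IsNoetherian Z ↥(Subalgebra.toSubmodule AO)›
  haveI : IsNoetherianRing ↥AO := isNoetherian_of_tower Z hNZ
  haveI : IsIntegrallyClosed ↥AO := integralClosure.isIntegrallyClosedOfFiniteExtension Q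
  haveI : IsDedekindRing ↥AO := ⟨⟩
  haveI : IsDedekindDomain ↥AO := inferInstance
  -- `Ii` as a submodule over `AO`
  have hIsmul : ∀ (a : ↥AO) (x : Ki), x ∈ Ii → a • x ∈ Ii := by
    intro a x hx
    rw [Algebra.smul_def]
    exact hstab a a.2 x hx
  set Ihat : Submodule ↥AO Ki :=
    { carrier := Ii
      add_mem' := fun h1 h2 => Ii.add_mem h1 h2
      zero_mem' := Ii.zero_mem
      smul_mem' := fun a x hx => hIsmul a x hx } with hIhat
  have hIhatFG : Ihat.FG := by
    obtain ⟨S, hS⟩ := hfg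
    refine ⟨S, le_antisymm ?_ ?_⟩
    · rw [Submodule.span_le]
      intro x hx
      have : x ∈ Submodule.span Z (S : Set Ki) := Submodule.subset_span hx
      rw [hS] at this
      exact this
    · intro x hx
      have hx' : x ∈ Submodule.span Z (S : Set Ki) := by rw [hS]; exact hx
      exact Submodule.span_subset_span Z ↥AO _ hx'
  have hfrac : IsFractional (nonZeroDivisors ↥AO) Ihat := isFractional_of_fg hIhatFG
  set Ifr : FractionalIdeal (nonZeroDivisors ↥AO) Ki := ⟨Ihat, hfrac⟩ with hIfr
  have hIfrne : Ifr ≠ 0 := by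
    intro h0
    have hne : ∃ x ∈ Ii, x ≠ (0 : Ki) := by
      by_contra hall
      push_neg at hall
      have : (Ii : Set Ki) ⊆ {0} := fun x hx => hall x hx
      have h1 : Submodule.span Q (Ii : Set Ki) ≤ ⊥ := by
        rw [← Submodule.span_zero_singleton Q]
        exact Submodule.span_mono this
      rw [hsp] at h1
      have : (1 : Ki) ∈ (⊥ : Submodule Q Ki) := h1 Submodule.mem_top
      simpa using this
    obtain ⟨x, hx, hxne⟩ := hne
    have : x ∈ Ifr := hx
    rw [h0] at this
    exact hxne (by simpa using this)
  -- the ideal corresponding to `g`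
  set fId : Ideal ↥AO :=
    { carrier := {x : ↥AO | (x : Ki) ∈ g}
      add_mem' := fun h1 h2 => g.add_mem h1 h2
      zero_mem' := g.zero_mem
      smul_mem' := fun a x hx => by
        simpa [Algebra.smul_def] using hgstab a a.2 x hx } with hfId
  have hfIdne : fId ≠ ⊥ := by
    obtain ⟨a, ha, hane⟩ := hgne
    intro hbot
    have : (⟨a, hgO a ha⟩ : ↥AO) ∈ fId := ha
    rw [hbot] at this
    exact hane (by simpa using Subtype.ext_iff.mp this)
  -- set equality between the coerced product and `g * Ii`
  have hprod : ∀ x : Ki,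
      x ∈ (fId : FractionalIdeal (nonZeroDivisors ↥AO) Ki) * Ifr ↔ x ∈ g * Ii := by
    intro x
    constructor
    · intro hx
      rw [← FractionalIdeal.mem_coe, FractionalIdeal.coe_mul] at hx
      refine Submodule.mul_induction_on hx ?_ ?_
      · intro m hm n hn
        obtain ⟨m', hm', rfl⟩ := (FractionalIdeal.mem_coeIdeal _).mp
          (FractionalIdeal.mem_coe.mp hm)
        have hmg : (algebraMap ↥AO Ki) m' ∈ g := hm'
        exact Submodule.mul_mem_mul hmg (FractionalIdeal.mem_coe.mp hn)
      · intro x y hx hy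
        exact Submodule.add_mem _ hx hy
    · intro hx
      refine Submodule.mul_induction_on hx ?_ ?_
      · intro m hm n hn
        have hm' : m ∈ (fId : FractionalIdeal (nonZeroDivisors ↥AO) Ki) :=
          FractionalIdeal.mem_coeIdeal_of_mem _ (show (⟨m, hgO m hm⟩ : ↥AO) ∈ fId from hm)
        exact FractionalIdeal.mul_mem_mul hm' hn
      · intro x y hx hy
        exact Submodule.add_mem _ hx hy
  obtain ⟨w, hwI, hsurj, hinj⟩ := key Ifr hIfrne fId hfIdne
  refine ⟨w, hwI, ?_, ?_⟩
  · intro x hx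
    obtain ⟨y, z, _, hz, hxeq⟩ := hsurj x hx
    exact ⟨(y : Ki), z, y.2, (hprod z).mp hz, by rwa [show algebraMap ↥AO Ki y = (y : Ki) from rfl] at hxeq⟩
  · intro b hb hbw
    have : algebraMap ↥AO Ki ⟨b, hb⟩ * w ∈
        (fId : FractionalIdeal (nonZeroDivisors ↥AO) Ki) * Ifr := (hprod _).mpr hbw
    exact hinj ⟨b, hb⟩ this


end AuxDedekind

section Paper

variable (Z : Type) [CommRing Z] [IsDomain Z] [IsDedekindDomain Z]
  (Q : Type) [Field Q] [Algebra Z Q] [IsFractionRing Z Q]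
  {n : ℕ} (K : Fin n → Type) [∀ i, Field (K i)]
  [∀ i, Algebra Q (K i)] [∀ i, FiniteDimensional Q (K i)]
  [∀ i, Algebra Z (K i)] [∀ i, IsScalarTower Z Q (K i)]

/-- A *lattice* in a finite-dimensional `Q`-vector space `W`: a finitely generated
sub-`Z`-module of `W` which contains a `Q`-basis of `W` (equivalently, spans `W` over `Q`). -/
def IsLatticeIn {W : Type} [AddCommGroup W] [Module Q W] [Module Z W]
    (L : Submodule Z W) : Prop :=
  L.FG ∧ Submodule.span Q (L : Set W) = ⊤

/-- An *order* in `K = K₁ ⊕ ⋯ ⊕ Kₙ`: a subring of `K` which is a lattice in `K`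
(equivalently, a `Z`-subalgebra whose underlying `Z`-module is a lattice in `K`). -/
def IsOrderIn (R : Subalgebra Z (∀ i, K i)) : Prop :=
  IsLatticeIn Z Q (Subalgebra.toSubmodule R)

/-- A sub-`Z`-module `M` of a `(∀ i, K i)`-module is a *sub-`R`-module* if it is stable
under the order `R`, i.e. `r • v ∈ M` for all `r ∈ R` and `v ∈ M`. -/
def IsStableUnder {W : Type} [AddCommGroup W] [Module Z W] [Module (∀ i, K i) W]
    (R : Subalgebra Z (∀ i, K i)) (M : Submodule Z W) : Prop :=
  ∀ r ∈ R, ∀ v ∈ M, r • v ∈ M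

/-- `M` and `N` are *isomorphic as `R`-modules*: there is an additive isomorphism
`M ≃ N` commuting with the action of every element of `R`. -/
def ModIso {W W' : Type} [AddCommGroup W] [Module Z W] [Module (∀ i, K i) W]
    [AddCommGroup W'] [Module Z W'] [Module (∀ i, K i) W']
    (R : Subalgebra Z (∀ i, K i)) (M : Submodule Z W) (N : Submodule Z W') : Prop :=
  ∃ e : M ≃+ N, ∀ r ∈ R, ∀ (v : W) (hv : v ∈ M) (hrv : r • v ∈ M),
    ((e ⟨r • v, hrv⟩ : N) : W') = r • ((e ⟨v, hv⟩ : N) : W')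

variable (s : Fin n → ℕ)

/-- The sub-`Z`-module of `V = ⊕ᵢ Kᵢ^(sᵢ)` cut out coordinatewise by a family of
submodules `W i j ⊆ Kᵢ`. -/
def piLatticeV (W : ∀ i, Fin (s i) → Submodule Z (K i)) :
    Submodule Z (∀ i, Fin (s i) → K i) where
  carrier := {v | ∀ i j, v i j ∈ W i j}
  add_mem' := fun hu hv i j => (W i j).add_mem (hu i j) (hv i j)
  zero_mem' := fun i j => (W i j).zero_mem
  smul_mem' := fun z _ hv i j => (W i j).smul_mem z (hv i j)

/-- The sub-`Z`-module `I₁ ⊕ ⋯ ⊕ Iₙ` of `K = K₁ ⊕ ⋯ ⊕ Kₙ`. -/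
def piIdeal (I : ∀ i, Submodule Z (K i)) : Submodule Z (∀ i, K i) where
  carrier := {x | ∀ i, x i ∈ I i}
  add_mem' := fun hu hv i => (I i).add_mem (hu i) (hv i)
  zero_mem' := fun i => (I i).zero_mem
  smul_mem' := fun z _ hx i => (I i).smul_mem z (hx i)

/-- A *fractional `Oᵢ`-ideal*: a finitely generated `Oᵢ`-stable sub-`Z`-module of `Kᵢ`
containing a `Q`-basis of `Kᵢ`, where `Oᵢ` is the integral closure of `Z` in `Kᵢ`. -/
def IsFracIdealAt (i : Fin n) (I : Submodule Z (K i)) : Prop :=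
  I.FG ∧ Submodule.span Q (I : Set (K i)) = ⊤ ∧
    ∀ r ∈ integralClosure Z (K i), ∀ x ∈ I, r * x ∈ I

/-- A *fractional ideal of the order `S`* in `K`: a finitely generated `S`-stable
sub-`Z`-module of `K` containing a `Q`-basis of `K`. -/
def IsFracIdealOf (S : Subalgebra Z (∀ i, K i)) (J : Submodule Z (∀ i, K i)) : Prop :=
  J.FG ∧ Submodule.span Q (J : Set (∀ i, K i)) = ⊤ ∧ ∀ r ∈ S, ∀ x ∈ J, r * x ∈ J

/-- The family `(O₁, …, Oₙ)` of maximal orders, as submodules. -/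
def maxFam : ∀ i : Fin n, Submodule Z (K i) :=
  fun i => Subalgebra.toSubmodule (integralClosure Z (K i))

/-- The module `⊕ᵢ (Oᵢ^(sᵢ-1) ⊕ Iᵢ)` inside `V`: in the `i`-th block, the first
`sᵢ - 1` coordinates are `Oᵢ` and the last one is `Iᵢ`. -/
def stdMod (I : ∀ i, Submodule Z (K i)) : Submodule Z (∀ i, Fin (s i) → K i) :=
  piLatticeV Z K s (fun i j =>
    if (j : ℕ) + 1 < s i then Subalgebra.toSubmodule (integralClosure Z (K i)) else I i)

/-- The `i`-th component `fᵢ` of the conductor `f = (R : O)`: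
those `a ∈ Kᵢ` with `a·Oᵢ ⊆ R` (via the canonical embedding `Kᵢ → K`). -/
def conductorComp (R : Subalgebra Z (∀ i, K i)) (i : Fin n) : Submodule Z (K i) where
  carrier := {a | ∀ b ∈ integralClosure Z (K i), Pi.single i (a * b) ∈ R}
  add_mem' := by
    intro x y hx hy b hb
    simpa [add_mul, Pi.single_add] using R.add_mem (hx b hb) (hy b hb)
  zero_mem' := by
    intro b hb
    simpa using R.zero_mem
  smul_mem' := by
    intro z x hx b hb
    simpa [smul_mul_assoc, Pi.single_smul] using R.smul_mem (hx b hb) z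

/-- The conductor `f = (R : O) = {x ∈ K : x·O ⊆ R}` as a sub-`Z`-module of `K`. -/
def conductorSub (R : Subalgebra Z (∀ i, K i)) : Submodule Z (∀ i, K i) where
  carrier := {x | ∀ y ∈ integralClosure Z (∀ i, K i), x * y ∈ R}
  add_mem' := by
    intro x y hx hy b hb
    simpa [add_mul] using R.add_mem (hx b hb) (hy b hb)
  zero_mem' := by
    intro b hb
    simpa using R.zero_mem
  smul_mem' := by
    intro z x hx b hb
    simpa [smul_mul_assoc] using R.smul_mem (hx b hb) z

/-- The module `⊕ᵢ (fᵢ^(sᵢ-1) ⊕ fᵢIᵢ)` inside `V`, where `f = f₁ ⊕ ⋯ ⊕ fₙ` is the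
conductor of the order `R` in the maximal order. -/
def stdModLow (R : Subalgebra Z (∀ i, K i)) (I : ∀ i, Submodule Z (K i)) :
    Submodule Z (∀ i, Fin (s i) → K i) :=
  piLatticeV Z K s (fun i j =>
    if (j : ℕ) + 1 < s i then conductorComp Z K R i else conductorComp Z K R i * I i)

/-- `M·S`, the `S`-module generated by `M` (e.g. `M·O`): the smallest sub-`Z`-module
containing all `r • v` with `r ∈ S` and `v ∈ M`. -/
def extendOrd {W : Type} [AddCommGroup W] [Module Z W] [Module (∀ i, K i) W]
    (S : Subalgebra Z (∀ i, K i)) (M : Submodule Z W) : Submodule Z W :=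
  Submodule.span Z {x | ∃ r ∈ S, ∃ v ∈ M, x = r • v}

/-- An *`R`-linear isomorphism between the quotient modules* `B/A` and `D/C`:
an additive isomorphism compatible with the induced action of every `r ∈ R`. -/
def QuotModIso {W W' : Type} [AddCommGroup W] [Module Z W] [Module (∀ i, K i) W]
    [AddCommGroup W'] [Module Z W'] [Module (∀ i, K i) W']
    (R : Subalgebra Z (∀ i, K i)) (B A : Submodule Z W) (D C : Submodule Z W') : Prop :=
  ∃ e : (↥B ⧸ A.comap B.subtype) ≃+ (↥D ⧸ C.comap D.subtype),
    ∀ r ∈ R, ∀ (v : W) (hv : v ∈ B) (hrv : r • v ∈ B)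
      (w : W') (hw : w ∈ D) (hrw : r • w ∈ D),
      e (Submodule.Quotient.mk ⟨v, hv⟩) = Submodule.Quotient.mk ⟨w, hw⟩ →
      e (Submodule.Quotient.mk ⟨r • v, hrv⟩) = Submodule.Quotient.mk ⟨r • w, hrw⟩

/-- The set `M_I`: sub-`R`-modules `N` of `V` with
`⊕ᵢ(fᵢ^(sᵢ-1) ⊕ fᵢIᵢ) ⊆ N ⊆ ⊕ᵢ(Oᵢ^(sᵢ-1) ⊕ Iᵢ)` and `N·O = ⊕ᵢ(Oᵢ^(sᵢ-1) ⊕ Iᵢ)`;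
these are exactly the preimages `q_I⁻¹(Ñ)` of the sub-`R`-modules `Ñ` of `Q(I)`
with `Ñ·O = Q(I)`. -/
def MSet (R : Subalgebra Z (∀ i, K i)) (I : ∀ i, Submodule Z (K i)) :
    Set (Submodule Z (∀ i, Fin (s i) → K i)) :=
  {N | stdModLow Z K s R I ≤ N ∧ N ≤ stdMod Z K s I ∧ IsStableUnder Z K R N ∧
    extendOrd Z K (integralClosure Z (∀ i, K i)) N = stdMod Z K s I}

/-- The set `q_I⁻¹(ψ̃(q_O(M)))`, where `ψ̃` is realised by the additive equivalence `e`
between `Q(O) = (⊕ᵢ(Oᵢ^(sᵢ-1) ⊕ Oᵢ))/(⊕ᵢ(fᵢ^(sᵢ-1) ⊕ fᵢOᵢ))` and `Q(I)`. -/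
def psiSet (R : Subalgebra Z (∀ i, K i)) (I : ∀ i, Submodule Z (K i))
    (e : (↥(stdMod Z K s (maxFam Z K)) ⧸
            (stdModLow Z K s R (maxFam Z K)).comap (stdMod Z K s (maxFam Z K)).subtype) ≃+
         (↥(stdMod Z K s I) ⧸ (stdModLow Z K s R I).comap (stdMod Z K s I).subtype))
    (M : Submodule Z (∀ i, Fin (s i) → K i)) : Set (∀ i, Fin (s i) → K i) :=
  {v | ∃ (hv : v ∈ stdMod Z K s I), ∃ m, ∃ (_ : m ∈ M) (hmO : m ∈ stdMod Z K s (maxFam Z K)),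
    e (Submodule.Quotient.mk ⟨m, hmO⟩) = Submodule.Quotient.mk ⟨v, hv⟩}


section AuxGlue

variable {Z Q K}

lemma aux_single_mem (i : Fin n) {b : K i} (hb : b ∈ integralClosure Z (K i)) :
    Pi.single i b ∈ integralClosure Z (∀ i, K i) := by
  obtain ⟨p, pmonic, peval⟩ := hb
  refine ⟨p * Polynomial.X, pmonic.mul Polynomial.monic_X, ?_⟩
  have hX : Polynomial.eval₂ (algebraMap Z (∀ i, K i)) (Pi.single i b) (p * Polynomial.X)
      = Polynomial.eval₂ (algebraMap Z (∀ i, K i)) (Pi.single i b) p * Pi.single i b := by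
    rw [Polynomial.eval₂_mul, Polynomial.eval₂_X]
  rw [hX]
  funext j
  rw [Pi.mul_apply]
  by_cases hj : j = i
  · subst hj
    have hcomp : (Pi.evalRingHom K j).comp (algebraMap Z (∀ i, K i)) = algebraMap Z (K j) :=
      RingHom.ext fun z => rfl
    have := Polynomial.hom_eval₂ p (algebraMap Z (∀ i, K i)) (Pi.evalRingHom K j)
      (Pi.single j b)
    rw [hcomp] at this
    have h2 : (Pi.evalRingHom K j) (Pi.single j b) = b := Pi.single_eq_same j b
    rw [h2] at this
    have h1 : (Polynomial.eval₂ (algebraMap Z (∀ i, K i)) (Pi.single j b) p) j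
        = Polynomial.eval₂ (algebraMap Z (K j)) b p := this
    rw [h1, Pi.single_eq_same, peval]
    simp
  · rw [Pi.single_eq_of_ne hj]
    simp

lemma aux_coord (i : Fin n) {x : ∀ j, K j} (hx : x ∈ integralClosure Z (∀ j, K j)) :
    x i ∈ integralClosure Z (K i) :=
  show IsIntegral Z ((Pi.evalAlgHom Z K i) x) from (show IsIntegral Z x from hx).map _

variable (Z Q K)

lemma aux_denom (hOfg : (Subalgebra.toSubmodule (integralClosure Z (∀ i, K i))).FG)
    (R : Subalgebra Z (∀ i, K i)) (hR : IsOrderIn Z Q K R) :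
    ∃ z : Z, z ≠ 0 ∧ ∀ x ∈ integralClosure Z (∀ i, K i), z • x ∈ R := by
  classical
  have hU : ∀ x : (∀ i, K i), ∃ z : Z, z ≠ 0 ∧ z • x ∈ R := by
    intro x
    have hx : x ∈ Submodule.span Q
        ((Subalgebra.toSubmodule R : Submodule Z (∀ i, K i)) : Set (∀ i, K i)) := by
      rw [hR.2]; trivial
    induction hx using Submodule.span_induction with
    | mem x hx => exact ⟨1, one_ne_zero, by simpa using hx⟩
    | zero => exact ⟨1, one_ne_zero, by rw [smul_zero]; exact R.zero_mem⟩
    | add x y _ _ hx hy =>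
        obtain ⟨z1, hz1, hx1⟩ := hx
        obtain ⟨z2, hz2, hy1⟩ := hy
        refine ⟨z1 * z2, mul_ne_zero hz1 hz2, ?_⟩
        rw [smul_add]
        have e1 : (z1 * z2) • x = z2 • (z1 • x) := by rw [mul_comm, mul_smul]
        have e2 : (z1 * z2) • y = z1 • (z2 • y) := by rw [mul_smul]
        rw [e1, e2]
        exact R.add_mem (R.smul_mem hx1 z2) (R.smul_mem hy1 z1)
    | smul q x _ hx =>
        obtain ⟨z1, hz1, hx1⟩ := hx
        obtain ⟨⟨a, y⟩, hq⟩ := IsLocalization.mk'_surjective (nonZeroDivisors Z) q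
        have hbne : (y : Z) ≠ 0 := nonZeroDivisors.ne_zero y.2
        refine ⟨(y : Z) * z1, mul_ne_zero hbne hz1, ?_⟩
        have h2 : (algebraMap Z Q ((y : Z) * z1)) * q = algebraMap Z Q (a * z1) := by
          rw [map_mul, map_mul]
          calc algebraMap Z Q (y : Z) * algebraMap Z Q z1 * q
              = q * algebraMap Z Q (y : Z) * algebraMap Z Q z1 := by ring
            _ = algebraMap Z Q a * algebraMap Z Q z1 := by
                rw [← hq, IsLocalization.mk'_spec]
        have heq3 : ((y : Z) * z1) • (q • x) = a • (z1 • x) :=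
          calc ((y : Z) * z1) • (q • x)
              = (algebraMap Z Q ((y : Z) * z1)) • (q • x) := by
                rw [IsScalarTower.algebraMap_smul]
            _ = ((algebraMap Z Q ((y : Z) * z1)) * q) • x := by rw [smul_smul]
            _ = (algebraMap Z Q (a * z1)) • x := by rw [h2]
            _ = (a * z1) • x := by rw [IsScalarTower.algebraMap_smul]
            _ = a • (z1 • x) := by rw [mul_smul]
        rw [heq3]
        exact R.smul_mem hx1 a
  obtain ⟨S, hS⟩ := hOfg
  have hgen : ∀ g ∈ S, ∃ z : Z, z ≠ 0 ∧ z • g ∈ R := fun g _ => hU g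
  choose zf hzfne hzfmem using hgen
  classical
  refine ⟨∏ g ∈ S.attach, zf g.1 g.2, Finset.prod_ne_zero_iff.mpr fun g _ => hzfne g.1 g.2, ?_⟩
  intro x hx
  have hx' : x ∈ Submodule.span Z (S : Set (∀ i, K i)) := by
    rw [hS]; exact hx
  clear hx
  induction hx' using Submodule.span_induction with
  | mem g hg =>
      have hg' : g ∈ S := hg
      have hsplit : ∏ g' ∈ S.attach, zf g'.1 g'.2
          = zf g hg' * ∏ g' ∈ S.attach.erase ⟨g, hg'⟩, zf g'.1 g'.2 :=
        (Finset.mul_prod_erase S.attach (fun g' => zf g'.1 g'.2)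
          (Finset.mem_attach S ⟨g, hg'⟩)).symm
      rw [hsplit, mul_comm, mul_smul]
      exact R.smul_mem (hzfmem g hg') _
  | zero => simpa using R.zero_mem
  | add x y _ _ hx hy =>
      rw [smul_add]
      exact R.add_mem hx hy
  | smul c x _ hx =>
      have : (∏ g ∈ S.attach, zf g.1 g.2) • (c • x)
          = c • ((∏ g ∈ S.attach, zf g.1 g.2) • x) := smul_comm _ _ _
      rw [this]
      exact R.smul_mem hx c

end AuxGlue

/-- Lemma `lemma:algcorrect`.(i). For every fractional `O`-ideal
`I = I₁ ⊕ ⋯ ⊕ Iₙ` there is an `R`-linear isomorphism `ψ̃ : Q(O) → Q(I)`, where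
`Q(I) = (⊕ᵢ (Oᵢ^(sᵢ-1) ⊕ Iᵢ))/(⊕ᵢ (fᵢ^(sᵢ-1) ⊕ fᵢIᵢ))`. -/
theorem statement3
    (hZ : ¬ IsField Z)
    (hOfg : (Subalgebra.toSubmodule (integralClosure Z (∀ i, K i))).FG)
    (hs : ∀ i, 0 < s i)
    (R : Subalgebra Z (∀ i, K i)) (hR : IsOrderIn Z Q K R)
    (I : ∀ i, Submodule Z (K i)) (hI : ∀ i, IsFracIdealAt Z Q K i (I i)) :
    QuotModIso Z K R
      (stdMod Z K s (maxFam Z K)) (stdModLow Z K s R (maxFam Z K))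
      (stdMod Z K s I) (stdModLow Z K s R I) := by
  classical
  have hRint : ∀ x ∈ R, x ∈ integralClosure Z (∀ i, K i) :=
    fun x hx => IsIntegral.of_mem_of_fg R hR.1 x hx
  obtain ⟨z, hzne, hzR⟩ := aux_denom Z Q K hOfg R hR
  -- basic facts about the conductor components
  have hgO : ∀ i, ∀ a ∈ conductorComp Z K R i, a ∈ integralClosure Z (K i) := by
    intro i a ha
    have h1 : Pi.single i (a * 1) ∈ R := ha 1 (one_mem _)
    have h2 := aux_coord i (hRint _ h1)
    rwa [Pi.single_eq_same, mul_one] at h2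
  have hgstab : ∀ i, ∀ r ∈ integralClosure Z (K i), ∀ a ∈ conductorComp Z K R i,
      r * a ∈ conductorComp Z K R i := by
    intro i r hr a ha b hb
    have : r * a * b = a * (r * b) := by ring
    rw [this]
    exact ha (r * b) (mul_mem hr hb)
  have hgne : ∀ i, ∃ a ∈ conductorComp Z K R i, a ≠ 0 := by
    intro i
    refine ⟨algebraMap Z (K i) z, ?_, ?_⟩
    · intro b hb
      have h1 : Pi.single i (algebraMap Z (K i) z * b) = z • Pi.single i b := by
        funext j
        by_cases hj : j = i
        · subst hj
          rw [Pi.single_eq_same, Pi.smul_apply, Pi.single_eq_same, Algebra.smul_def]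
        · rw [Pi.single_eq_of_ne hj, Pi.smul_apply, Pi.single_eq_of_ne hj, smul_zero]
      rw [h1]
      exact hzR _ (aux_single_mem i hb)
    · rw [IsScalarTower.algebraMap_apply Z Q (K i)]
      simp only [ne_eq, map_eq_zero]
      exact fun h => hzne (IsFractionRing.injective Z Q (by simpa using h))
  -- finite generation of each Oᵢ
  have hOifg : ∀ i, (Subalgebra.toSubmodule (integralClosure Z (K i))).FG := by
    intro i
    have heq : Subalgebra.toSubmodule (integralClosure Z (K i))
        = Submodule.map (LinearMap.proj i : (∀ j, K j) →ₗ[Z] K i)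
            (Subalgebra.toSubmodule (integralClosure Z (∀ j, K j))) := by
      ext x
      constructor
      · intro hx
        exact ⟨Pi.single i x, aux_single_mem i hx, Pi.single_eq_same i x⟩
      · rintro ⟨y, hy, rfl⟩
        exact aux_coord i hy
    rw [heq]
    exact hOfg.map _
  -- choose the elements wᵢ
  have hkeyc : ∀ i, ∃ w ∈ I i,
      (∀ x ∈ I i, ∃ b zz, b ∈ integralClosure Z (K i) ∧
        zz ∈ conductorComp Z K R i * I i ∧ x = b * w + zz) ∧
      (∀ b ∈ integralClosure Z (K i), b * w ∈ conductorComp Z K R i * I i →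
        b ∈ conductorComp Z K R i) :=
    fun i => component Z Q (K i) (hOifg i) (conductorComp Z K R i) (hgO i) (hgstab i)
      (hgne i) (I i) (hI i).1 (hI i).2.1 (hI i).2.2
  choose w hwI hwsurj hwinj using hkeyc
  -- the multiplication map μ
  set μ : (∀ i, Fin (s i) → K i) →ₗ[Z] (∀ i, Fin (s i) → K i) :=
    { toFun := fun v i j => if (j : ℕ) + 1 < s i then v i j else w i * v i j
      map_add' := by
        intro u v
        funext i j
        by_cases h : (j : ℕ) + 1 < s i <;> simp [h, mul_add]
      map_smul' := by
        intro c v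
        funext i j
        by_cases h : (j : ℕ) + 1 < s i <;> simp [h, Algebra.mul_smul_comm] } with hμ
  have hμapp : ∀ v i j, μ v i j = if (j : ℕ) + 1 < s i then v i j else w i * v i j :=
    fun v i j => rfl
  have hccmul : ∀ i, conductorComp Z K R i * maxFam Z K i = conductorComp Z K R i := by
    intro i
    refine le_antisymm (Submodule.mul_le.mpr fun a ha b hb => ?_) fun a ha => ?_
    · rw [mul_comm]
      exact hgstab i b hb a ha
    · have := Submodule.mul_mem_mul ha
        (show (1 : K i) ∈ maxFam Z K i from one_mem (integralClosure Z (K i)))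
      rwa [mul_one] at this
  have hstdmem : ∀ (J : ∀ i, Submodule Z (K i)) (v : ∀ i, Fin (s i) → K i),
      v ∈ stdMod Z K s J ↔ ∀ i (j : Fin (s i)), v i j ∈
        (if (j : ℕ) + 1 < s i then Subalgebra.toSubmodule (integralClosure Z (K i))
          else J i) := fun J v => Iff.rfl
  have hlowmem : ∀ (J : ∀ i, Submodule Z (K i)) (v : ∀ i, Fin (s i) → K i),
      v ∈ stdModLow Z K s R J ↔ ∀ i (j : Fin (s i)), v i j ∈
        (if (j : ℕ) + 1 < s i then conductorComp Z K R i
          else conductorComp Z K R i * J i) := fun J v => Iff.rfl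
  have hBD : ∀ v ∈ stdMod Z K s (maxFam Z K), μ v ∈ stdMod Z K s I := by
    intro v hv
    rw [hstdmem] at hv ⊢
    intro i j
    have hvij := hv i j
    rw [hμapp]
    by_cases h : (j : ℕ) + 1 < s i
    · simp only [if_pos h] at hvij ⊢
      exact hvij
    · simp only [if_neg h] at hvij ⊢
      rw [mul_comm]
      exact (hI i).2.2 _ hvij _ (hwI i)
  have hlow_iff : ∀ v ∈ stdMod Z K s (maxFam Z K),
      (μ v ∈ stdModLow Z K s R I ↔ v ∈ stdModLow Z K s R (maxFam Z K)) := by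
    intro v hv
    rw [hstdmem] at hv
    constructor
    · intro h
      rw [hlowmem] at h ⊢
      intro i j
      have hij := h i j
      have hvij := hv i j
      rw [hμapp] at hij
      by_cases hc : (j : ℕ) + 1 < s i
      · simp only [if_pos hc] at hij ⊢
        exact hij
      · simp only [if_neg hc] at hij hvij ⊢
        rw [hccmul i]
        refine hwinj i (v i j) hvij ?_
        rwa [mul_comm (v i j) (w i)]
    · intro h
      rw [hlowmem] at h ⊢
      intro i j
      have hij := h i j
      rw [hμapp]
      by_cases hc : (j : ℕ) + 1 < s i
      · simp only [if_pos hc] at hij ⊢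
        exact hij
      · simp only [if_neg hc] at hij ⊢
        rw [hccmul i] at hij
        rw [mul_comm (w i) (v i j)]
        exact Submodule.mul_mem_mul hij (hwI i)
  have hsurjd : ∀ d ∈ stdMod Z K s I, ∃ b ∈ stdMod Z K s (maxFam Z K),
      μ b - d ∈ stdModLow Z K s R I := by
    intro d hd
    rw [hstdmem] at hd
    have hch : ∀ i (j : Fin (s i)), ∃ y : K i, y ∈ integralClosure Z (K i) ∧
        (if (j : ℕ) + 1 < s i then y else w i * y) - d i j ∈
          (if (j : ℕ) + 1 < s i then conductorComp Z K R i
            else conductorComp Z K R i * I i) := by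
      intro i j
      have hdij := hd i j
      by_cases hc : (j : ℕ) + 1 < s i
      · simp only [if_pos hc] at hdij
        exact ⟨d i j, hdij, by simp only [if_pos hc, sub_self]; exact zero_mem _⟩
      · simp only [if_neg hc] at hdij
        obtain ⟨b, zz, hb, hz, heq⟩ := hwsurj i (d i j) hdij
        refine ⟨b, hb, ?_⟩
        simp only [if_neg hc]
        have : w i * b - d i j = -zz := by rw [heq]; ring
        rw [this]
        exact Submodule.neg_mem _ hz
    choose Y hY1 hY2 using hch
    refine ⟨Y, ?_, ?_⟩
    · rw [hstdmem]
      intro i j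
      by_cases hc : (j : ℕ) + 1 < s i
      · simp only [if_pos hc]; exact hY1 i j
      · simp only [if_neg hc]; exact hY1 i j
    · rw [hlowmem]
      intro i j
      have heq4 : (μ Y - d) i j
          = (if (j : ℕ) + 1 < s i then Y i j else w i * Y i j) - d i j := by
        rw [Pi.sub_apply, Pi.sub_apply, hμapp]
      rw [heq4]
      exact hY2 i j
  -- the quotient map and the equivalence
  set B := stdMod Z K s (maxFam Z K) with hB
  set D := stdMod Z K s I with hD
  set A' := (stdModLow Z K s R (maxFam Z K)).comap B.subtype with hA'
  set C' := (stdModLow Z K s R I).comap D.subtype with hC'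
  set φ : B →ₗ[Z] (D ⧸ C') := C'.mkQ.comp (μ.restrict hBD) with hφ
  have hφapp : ∀ (v : ∀ i, Fin (s i) → K i) (hv : v ∈ B),
      φ ⟨v, hv⟩ = Submodule.Quotient.mk ⟨μ v, hBD v hv⟩ := fun v hv => rfl
  have hle : A' ≤ LinearMap.ker φ := by
    rintro ⟨v, hv⟩ hvA
    rw [LinearMap.mem_ker, hφapp, Submodule.Quotient.mk_eq_zero]
    exact (hlow_iff v hv).mpr hvA
  set φq : (B ⧸ A') →ₗ[Z] (D ⧸ C') := Submodule.liftQ A' φ hle with hφq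
  have hφqapp : ∀ (v : ∀ i, Fin (s i) → K i) (hv : v ∈ B),
      φq (Submodule.Quotient.mk ⟨v, hv⟩) = Submodule.Quotient.mk ⟨μ v, hBD v hv⟩ :=
    fun v hv => rfl
  have hinj : Function.Injective φq := by
    rw [← LinearMap.ker_eq_bot, eq_bot_iff]
    rintro x hx
    obtain ⟨⟨v, hv⟩, rfl⟩ := Submodule.Quotient.mk_surjective A' x
    rw [LinearMap.mem_ker, hφqapp, Submodule.Quotient.mk_eq_zero] at hx
    rw [Submodule.mem_bot, Submodule.Quotient.mk_eq_zero]
    exact (hlow_iff v hv).mp hx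
  have hsurjq : Function.Surjective φq := by
    intro dq
    obtain ⟨⟨d, hd⟩, rfl⟩ := Submodule.Quotient.mk_surjective C' dq
    obtain ⟨b, hb, hdiff⟩ := hsurjd d hd
    refine ⟨Submodule.Quotient.mk ⟨b, hb⟩, ?_⟩
    rw [hφqapp]
    rw [Submodule.Quotient.eq]
    exact hdiff
  set e := (LinearEquiv.ofBijective φq ⟨hinj, hsurjq⟩).toAddEquiv with he
  have heapp : ∀ (v : ∀ i, Fin (s i) → K i) (hv : v ∈ B),
      e (Submodule.Quotient.mk ⟨v, hv⟩) = Submodule.Quotient.mk ⟨μ v, hBD v hv⟩ :=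
    fun v hv => hφqapp v hv
  -- R-stability of the lower module
  have hccR : ∀ i, ∀ r ∈ R, ∀ a ∈ conductorComp Z K R i, r i * a ∈ conductorComp Z K R i :=
    fun i r hr a ha => hgstab i (r i) (aux_coord i (hRint r hr)) a ha
  have hstabLow : ∀ r ∈ R, ∀ u ∈ stdModLow Z K s R I, r • u ∈ stdModLow Z K s R I := by
    intro r hr u hu
    rw [hlowmem] at hu ⊢
    intro i j
    have hij := hu i j
    have happ : (r • u) i j = r i * u i j := rfl
    rw [happ]
    by_cases hc : (j : ℕ) + 1 < s i
    · simp only [if_pos hc] at hij ⊢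
      exact hccR i r hr _ hij
    · simp only [if_neg hc] at hij ⊢
      refine Submodule.mul_induction_on hij ?_ ?_
      · intro a ha b hb
        rw [← mul_assoc]
        exact Submodule.mul_mem_mul (hccR i r hr a ha) hb
      · intro x y hx hy
        rw [mul_add]
        exact add_mem hx hy
  have hμr : ∀ (r : ∀ i, K i) (v : ∀ i, Fin (s i) → K i), μ (r • v) = r • μ v := by
    intro r v
    funext i j
    have h1 : (r • v) i j = r i * v i j := rfl
    have h2 : (r • μ v) i j = r i * μ v i j := rfl
    rw [hμapp, h1, h2, hμapp]
    by_cases hc : (j : ℕ) + 1 < s i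
    · rw [if_pos hc, if_pos hc]
    · simp only [if_neg hc]; ring
  refine ⟨e, ?_⟩
  intro r hr v hv hrv w' hw' hrw' heq
  rw [heapp] at heq
  have hdiff : μ v - w' ∈ stdModLow Z K s R I := by
    have := (Submodule.Quotient.eq C').mp heq
    exact this
  rw [heapp]
  rw [Submodule.Quotient.eq]
  show μ (r • v) - r • w' ∈ stdModLow Z K s R I
  rw [hμr, ← smul_sub]
  exact hstabLow r hr _ hdiff

end Paper
end

section
/- Let R be an order in K and let I and J be fractional R-ideals. Then I and J are isomorphic as R-modules if and only if there exists an invertible element λ ∈ K such that I = λJ. -/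
/-!
Setting: `Z` is a Dedekind domain (not a field) with fraction field `Q`;
`K i` (for `i : Fin n`) are finite field extensions of `Q` and
`K = K₁ ⊕ ⋯ ⊕ Kₙ` is modelled as the product `∀ i, K i`;
`O i = integralClosure Z (K i)` and `O = integralClosure Z (∀ i, K i)`;
`V = K₁^(s 1) ⊕ ⋯ ⊕ Kₙ^(s n)` is modelled as `∀ i, Fin (s i) → K i`,
a module over `∀ i, K i` with the componentwise diagonal action.
-/

open Submodule

section Paper

variable (Z : Type) [CommRing Z] [IsDomain Z] [IsDedekindDomain Z]
  (Q : Type) [Field Q] [Algebra Z Q] [IsFractionRing Z Q]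
  {n : ℕ} (K : Fin n → Type) [∀ i, Field (K i)]
  [∀ i, Algebra Q (K i)] [∀ i, FiniteDimensional Q (K i)]
  [∀ i, Algebra Z (K i)] [∀ i, IsScalarTower Z Q (K i)]

variable (s : Fin n → ℕ)

/-!
An isomorphism `φ : I ≃ J` of `R`-modules commutes with multiplication by `R`, and every element
of `K` lands in `R` after multiplication by a nonzero element of `Z`, which is a unit of `K`.
Computing `φ (d d' x y)` in two ways therefore gives `y φ(x) = x φ(y)` for all `x, y ∈ I`, so in
each factor `Kᵢ` the map `φ` is multiplication by one scalar. These scalars are nonzero because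
`J = φ(I)` has elements with nonzero `i`-th coordinate, so `φ` is multiplication by a unit.
-/

section DenominatorsIn

variable {A : Type*} [CommRing A] {R I : Set A}

theorem mul_apply_comm_of_map_mul (hden : ∀ a : A, ∃ d ∈ R, IsUnit d ∧ d * a ∈ R)
    (hRI : ∀ r ∈ R, ∀ x ∈ I, r * x ∈ I) (f : I → A)
    (hf : ∀ r ∈ R, ∀ (x : I) (hrx : r * x ∈ I), f ⟨r * x, hrx⟩ = r * f x) (x y : I) :
    (y : A) * f x = x * f y := by
  obtain ⟨d, hdR, hdu, hdy⟩ := hden y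
  obtain ⟨d', hd'R, hd'u, hd'x⟩ := hden x
  have hyx : d * y * x ∈ I := hRI _ hdy _ x.2
  have hxy : d' * x * y ∈ I := hRI _ hd'x _ y.2
  have hcross : d' * (d * y * x) = d * (d' * x * y) := by ring
  have h : d * d' * (y * f x) = d * d' * (x * f y) :=
    calc d * d' * (y * f x) = d' * f ⟨d * y * x, hyx⟩ := by rw [hf _ hdy x hyx]; ring
      _ = f ⟨d' * (d * y * x), hRI _ hd'R _ hyx⟩ := (hf _ hd'R ⟨_, hyx⟩ _).symm
      _ = f ⟨d * (d' * x * y), hRI _ hdR _ hxy⟩ := by simp_rw [hcross]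
      _ = d * f ⟨d' * x * y, hxy⟩ := hf _ hdR ⟨_, hxy⟩ _
      _ = d * d' * (x * f y) := by rw [hf _ hd'x y hxy]; ring
  exact (hdu.mul hd'u).mul_left_cancel h

end DenominatorsIn

theorem exists_apply_ne_zero_of_span_eq_top {ι S : Type*} {F : ι → Type*} [Semiring S]
    [∀ i, Semiring (F i)] [∀ i, Nontrivial (F i)] [∀ i, Module S (F i)] {M : Set (∀ i, F i)}
    (hM : Submodule.span S M = ⊤) (i : ι) : ∃ x ∈ M, x i ≠ 0 := by
  by_contra! h
  have hker : Submodule.span S M ≤ LinearMap.ker (LinearMap.proj (R := S) (φ := F) i) :=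
    Submodule.span_le.2 h
  rw [hM, top_le_iff, LinearMap.ker_eq_top] at hker
  exact one_ne_zero (LinearMap.congr_fun hker 1)

section ProductOfFields

variable {ι : Type*} {F : ι → Type*} [∀ i, Field (F i)]

theorem exists_eq_mul_of_mul_apply_comm {I : Set (∀ i, F i)} (hI : ∀ i, ∃ x ∈ I, x i ≠ 0)
    (f : I → ∀ i, F i) (hf : ∀ x y : I, (y : ∀ i, F i) * f x = x * f y) :
    ∃ c, ∀ x : I, f x = c * x := by
  choose a haI ha0 using hI
  refine ⟨fun i => f ⟨a i, haI i⟩ i / a i i, fun x => funext fun i => ?_⟩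
  have h := congrFun (hf ⟨a i, haI i⟩ x) i
  simp only [Pi.mul_apply] at h ⊢
  field_simp [ha0 i]
  linear_combination -h

theorem isUnit_and_eq_image_of_equiv {I J : Set (∀ i, F i)} (hJ : ∀ i, ∃ y ∈ J, y i ≠ 0)
    (e : I ≃ J) {c : ∀ i, F i} (hc : ∀ x : I, (e x : ∀ i, F i) = c * x) :
    IsUnit c⁻¹ ∧ I = (c⁻¹ * ·) '' J := by
  have hc_symm (y : ∀ i, F i) (hy : y ∈ J) : y = c * e.symm ⟨y, hy⟩ := by
    rw [← hc, e.apply_symm_apply]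
  have hc0 (i : ι) : c i ≠ 0 := by
    obtain ⟨y, hyJ, hy0⟩ := hJ i
    intro h0
    exact hy0 (by simpa [h0] using congrFun (hc_symm y hyJ) i)
  have hc_inv_mul (x : ∀ i, F i) : c⁻¹ * (c * x) = x :=
    funext fun i => inv_mul_cancel_left₀ (hc0 i) (x i)
  refine ⟨Pi.isUnit_iff.2 fun i => (inv_ne_zero (hc0 i)).isUnit,
    Set.ext fun x => ⟨fun hx => ?_, ?_⟩⟩
  · exact ⟨e ⟨x, hx⟩, (e ⟨x, hx⟩).2, by simp only [hc, hc_inv_mul]⟩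
  · rintro ⟨y, hyJ, rfl⟩
    show c⁻¹ * y ∈ I
    rw [hc_symm y hyJ, hc_inv_mul]
    exact (e.symm ⟨y, hyJ⟩).2

end ProductOfFields

omit [IsDomain Z] [IsDedekindDomain Z] [∀ i, FiniteDimensional Q (K i)] in
theorem exists_isUnit_mul_mem_of_isOrderIn {R : Subalgebra Z (∀ i, K i)}
    (hR : IsOrderIn Z Q K R) (a : ∀ i, K i) :
    ∃ d ∈ (R : Set (∀ i, K i)), IsUnit d ∧ d * a ∈ R := by
  have ha : a ∈ Submodule.span Q (Subalgebra.toSubmodule R : Set (∀ i, K i)) :=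
    hR.2 ▸ Submodule.mem_top
  obtain ⟨t, ht⟩ := multiple_mem_span_of_mem_localization_span (nonZeroDivisors Z) Q _ a ha
  rw [Submodule.span_eq] at ht
  refine ⟨algebraMap Z _ t, R.algebraMap_mem _, ?_, ?_⟩
  · rw [IsScalarTower.algebraMap_apply Z Q (∀ i, K i)]
    exact (IsLocalization.map_units Q t).map _
  · rwa [← Algebra.smul_def]

omit [IsDomain Z] [IsDedekindDomain Z] in
theorem modIso_map_mulLeft (R : Subalgebra Z (∀ i, K i)) (J : Submodule Z (∀ i, K i))
    (u : (∀ i, K i)ˣ) : ModIso Z K R (J.map (LinearMap.mulLeft Z (u : ∀ i, K i))) J := by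
  set e := u.mulLeftLinearEquiv Z (∀ i, K i)
  have hJ : (J.map (LinearMap.mulLeft Z (u : ∀ i, K i))).map (e.symm : _ →ₗ[Z] _) = J :=
    (Submodule.map_symm_eq_iff e).2 rfl
  refine ⟨(e.symm.ofSubmodules _ J hJ).toAddEquiv, fun r _ v _ _ => ?_⟩
  change e.symm (r * v) = r * e.symm v
  simp only [e, Units.symm_mulLeftLinearEquiv_apply, mul_left_comm]

theorem statement9
    (R : Subalgebra Z (∀ i, K i)) (hR : IsOrderIn Z Q K R)
    (I J : Submodule Z (∀ i, K i))
    (hI : IsFracIdealOf Z Q K R I) (hJ : IsFracIdealOf Z Q K R J) :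
    ModIso Z K R I J ↔
      ∃ lam : ∀ i, K i, IsUnit lam ∧ I = Submodule.map (LinearMap.mulLeft Z lam) J := by
  refine ⟨fun ⟨e, he⟩ => ?_, fun ⟨_, ⟨u, rfl⟩, hIJ⟩ => hIJ ▸ modIso_map_mulLeft Z K R J u⟩
  have hcomm := mul_apply_comm_of_map_mul (exists_isUnit_mul_mem_of_isOrderIn Z Q K hR) hI.2.2
    (fun x : (I : Set (∀ i, K i)) => (e x : ∀ i, K i)) fun r hr x hrx => he r hr x x.2 hrx
  obtain ⟨c, hc⟩ :=
    exists_eq_mul_of_mul_apply_comm (exists_apply_ne_zero_of_span_eq_top hI.2.1) _ hcomm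
  obtain ⟨hcu, hIJ⟩ :=
    isUnit_and_eq_image_of_equiv (exists_apply_ne_zero_of_span_eq_top hJ.2.1) e.toEquiv hc
  refine ⟨c⁻¹, hcu, SetLike.coe_injective ?_⟩
  rwa [Submodule.map_coe]

end Paper
end

section
/- Let R be an order in K, let O be the integral closure of Z in K, and let f = (R:O) = {x ∈ K : xO ⊆ R}. Then f contains an invertible element of K if and only if O is finitely generated as a Z-module. -/
/-!
Setting: `Z` is a Dedekind domain (not a field) with fraction field `Q`;
`K i` (for `i : Fin n`) are finite field extensions of `Q` and
`K = K₁ ⊕ ⋯ ⊕ Kₙ` is modelled as the product `∀ i, K i`;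
`O i = integralClosure Z (K i)` and `O = integralClosure Z (∀ i, K i)`;
`V = K₁^(s 1) ⊕ ⋯ ⊕ Kₙ^(s n)` is modelled as `∀ i, Fin (s i) → K i`,
a module over `∀ i, K i` with the componentwise diagonal action.
-/

open Submodule

section Paper

variable (Z : Type) [CommRing Z] [IsDomain Z] [IsDedekindDomain Z]
  (Q : Type) [Field Q] [Algebra Z Q] [IsFractionRing Z Q]
  {n : ℕ} (K : Fin n → Type) [∀ i, Field (K i)]
  [∀ i, Algebra Q (K i)] [∀ i, FiniteDimensional Q (K i)]
  [∀ i, Algebra Z (K i)] [∀ i, IsScalarTower Z Q (K i)]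

variable (s : Fin n → ℕ)

theorem Submodule.fg_of_isUnit_mul_mem {A B : Type} [CommRing A] [IsNoetherianRing A]
    [CommRing B] [Algebra A B] {L N : Submodule A B} (hL : L.FG) {u : B} (hu : IsUnit u)
    (h : ∀ y ∈ N, u * y ∈ L) : N.FG :=
  hL.map (LinearMap.mulLeft A ↑hu.unit⁻¹) |>.of_le fun y hy =>
    ⟨u * y, h y hy, by simp [← mul_assoc]⟩

theorem Submodule.exists_smul_mem_of_span_eq_top {A M : Type} [CommRing A]
    (S : Submonoid A) (F : Type) [CommRing F] [Algebra A F] [IsLocalization S F]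
    [AddCommGroup M] [Module A M] [Module F M] [IsScalarTower A F M]
    {L : Submodule A M} (hL : span F (L : Set M) = ⊤) (x : M) : ∃ s : S, s • x ∈ L := by
  simpa using multiple_mem_span_of_mem_localization_span S F (L : Set M) x (hL ▸ mem_top)

theorem Submodule.FG.exists_smul_mem {A M : Type} [CommSemiring A] [AddCommMonoid M]
    [Module A M] (S : Submonoid A) {L : Submodule A M} (hL : ∀ x : M, ∃ s : S, s • x ∈ L)
    {N : Submodule A M} (hN : N.FG) : ∃ s : S, ∀ x ∈ N, s • x ∈ L := by
  induction N, hN using fg_induction with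
  | singleton x =>
    obtain ⟨s, hs⟩ := hL x
    refine ⟨s, fun y hy => ?_⟩
    obtain ⟨a, rfl⟩ := mem_span_singleton.mp hy
    rw [smul_comm]
    exact L.smul_mem a hs
  | sup N₁ N₂ _ _ ih₁ ih₂ =>
    obtain ⟨s₁, hs₁⟩ := ih₁
    obtain ⟨s₂, hs₂⟩ := ih₂
    refine ⟨s₁ * s₂, fun x hx => ?_⟩
    obtain ⟨y, hy, z, hz, rfl⟩ := mem_sup.mp hx
    rw [smul_add, mul_comm s₁, mul_smul, mul_comm s₂, mul_smul s₁]
    exact L.add_mem (L.smul_mem _ (hs₁ y hy)) (L.smul_mem _ (hs₂ z hz))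

theorem isUnit_algebraMap_of_mem_nonZeroDivisors {A F B : Type} [CommRing A] [CommRing F]
    [CommRing B] [Algebra A F] [IsFractionRing A F] [Algebra A B] [Algebra F B]
    [IsScalarTower A F B] {a : A} (ha : a ∈ nonZeroDivisors A) : IsUnit (algebraMap A B a) := by
  rw [IsScalarTower.algebraMap_apply A F B]
  exact (IsLocalization.map_units F ⟨a, ha⟩).map _

theorem statement11
    (R : Subalgebra Z (∀ i, K i)) (hR : IsOrderIn Z Q K R) :
    (∃ x : ∀ i, K i, IsUnit x ∧ x ∈ conductorSub Z K R) ↔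
      (Subalgebra.toSubmodule (integralClosure Z (∀ i, K i))).FG := by
  constructor
  · rintro ⟨x, hx, hxf⟩
    exact fg_of_isUnit_mul_mem hR.1 hx hxf
  · intro hO
    obtain ⟨z, hz⟩ := hO.exists_smul_mem (nonZeroDivisors Z)
      (exists_smul_mem_of_span_eq_top (nonZeroDivisors Z) Q hR.2)
    refine ⟨algebraMap Z _ z, isUnit_algebraMap_of_mem_nonZeroDivisors (F := Q) z.2, fun y hy => ?_⟩
    rw [← Algebra.smul_def]
    exact hz y hy

end Paper
end

section
/- Assume O is finitely generated as a Z-module. The map sending a fractional O-ideal I to the tuple (e_1 I, …, e_n I) of fractional O_i-ideals induces a group isomorphism Pic(O) ≅ Pic(O_1) × … × Pic(O_n). -/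
set_option linter.unusedSectionVars false

/-!
Everything splits along the idempotents `eᵢ = Pi.single i 1`. Integrality is checked
componentwise, so `O = O₁ ⊕ ⋯ ⊕ Oₙ` and every `eᵢ` lies in `O`; hence an `O`-stable submodule `J`
of `K` is the direct sum of its projections `eᵢJ`. Products, multiplication by a unit and the
lattice conditions are computed componentwise, so `J ↦ (eᵢJ)ᵢ` and `(Jᵢ)ᵢ ↦ J₁ ⊕ ⋯ ⊕ Jₙ` are
mutually inverse, multiplicative, and match principal ideals on both sides.
-/

/-!
Setting: `Z` is a Dedekind domain (not a field) with fraction field `Q`;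
`K i` (for `i : Fin n`) are finite field extensions of `Q` and
`K = K₁ ⊕ ⋯ ⊕ Kₙ` is modelled as the product `∀ i, K i`;
`O i = integralClosure Z (K i)` and `O = integralClosure Z (∀ i, K i)`;
`V = K₁^(s 1) ⊕ ⋯ ⊕ Kₙ^(s n)` is modelled as `∀ i, Fin (s i) → K i`,
a module over `∀ i, K i` with the componentwise diagonal action.
-/

open Submodule

section Paper

variable (Z : Type) [CommRing Z] [IsDomain Z] [IsDedekindDomain Z]
  (Q : Type) [Field Q] [Algebra Z Q] [IsFractionRing Z Q]
  {n : ℕ} (K : Fin n → Type) [∀ i, Field (K i)]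
  [∀ i, Algebra Q (K i)] [∀ i, FiniteDimensional Q (K i)]
  [∀ i, Algebra Z (K i)] [∀ i, IsScalarTower Z Q (K i)]

variable (s : Fin n → ℕ)

/-- An invertible fractional `O`-ideal of `K`. -/
def IsInvFracIdealO (J : Submodule Z (∀ i, K i)) : Prop :=
  IsFracIdealOf Z Q K (integralClosure Z (∀ i, K i)) J ∧
    ∃ J', IsFracIdealOf Z Q K (integralClosure Z (∀ i, K i)) J' ∧
      J * J' = Subalgebra.toSubmodule (integralClosure Z (∀ i, K i))

/-- An invertible fractional `Oᵢ`-ideal of `Kᵢ`. -/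
def IsInvFracIdealAt (i : Fin n) (J : Submodule Z (K i)) : Prop :=
  IsFracIdealAt Z Q K i J ∧
    ∃ J', IsFracIdealAt Z Q K i J' ∧
      J * J' = Subalgebra.toSubmodule (integralClosure Z (K i))

namespace Submodule

open LinearMap Set

section Pi

variable {ι R : Type*} [CommSemiring R] {A : ι → Type*} [∀ i, Semiring (A i)]
  [∀ i, Algebra R (A i)]

theorem map_proj_mul (J J' : Submodule R (∀ i, A i)) (i : ι) :
    (J * J').map (proj i) = J.map (proj i) * J'.map (proj i) :=
  Submodule.map_mul J J' (Pi.evalAlgHom R A i)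

theorem map_proj_map_mulLeft (J : Submodule R (∀ i, A i)) (lam : ∀ i, A i) (i : ι) :
    (J.map (mulLeft R lam)).map (proj i) = (J.map (proj i)).map (mulLeft R (lam i)) := by
  rw [← map_comp, ← map_comp]
  rfl

variable [DecidableEq ι]

theorem map_proj_pi (I : ∀ i, Submodule R (A i)) (i : ι) : (pi univ I).map (proj i) = I i := by
  refine le_antisymm ?_ fun a ha => ⟨Pi.single i a, le_comap_single_pi I ha, Pi.single_eq_same i a⟩
  rintro _ ⟨y, hy, rfl⟩
  exact hy i trivial

variable [Finite ι]

theorem pi_univ_mul_pi_univ (I J : ∀ i, Submodule R (A i)) :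
    pi univ I * pi univ J = pi univ fun i => I i * J i := by
  refine le_antisymm (mul_le.2 fun x hx y hy i _ => mul_mem_mul (hx i trivial) (hy i trivial)) ?_
  rw [← iSup_map_single]
  refine iSup_le fun i => map_le_iff_le_comap.2 <| mul_le.2 fun a ha b hb => ?_
  rw [mem_comap, single_apply, Pi.single_mul]
  exact mul_mem_mul (le_comap_single_pi I ha) (le_comap_single_pi J hb)

theorem pi_map_proj_eq_self {J : Submodule R (∀ i, A i)}
    (hJ : ∀ i, ∀ x ∈ J, Pi.single i 1 * x ∈ J) : pi univ (fun i => J.map (proj i)) = J := by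
  refine le_antisymm ?_ fun x hx i _ => ⟨x, hx, rfl⟩
  rw [← iSup_map_single]
  refine iSup_le fun i => ?_
  rintro _ ⟨_, ⟨y, hy, rfl⟩, rfl⟩
  simpa only [single_apply, proj_apply, ← Pi.single_mul_left, one_mul] using hJ i y hy

end Pi

theorem span_pi_univ {ι S : Type*} [Finite ι] [DecidableEq ι] [Semiring S] {M : ι → Type*}
    [∀ i, AddCommMonoid (M i)] [∀ i, Module S (M i)] {s : ∀ i, Set (M i)}
    (hs : ∀ i, (0 : M i) ∈ s i) : span S (univ.pi s) = pi univ fun i => span S (s i) := by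
  refine le_antisymm (span_le.2 fun x hx i _ => subset_span (hx i trivial)) ?_
  rw [← iSup_map_single]
  refine iSup_le fun i => ?_
  rw [map_span, span_le]
  rintro _ ⟨a, ha, rfl⟩
  refine subset_span fun j _ => ?_
  rcases eq_or_ne j i with rfl | hj
  · simpa using ha
  · simpa [Pi.single_eq_of_ne hj] using hs j

end Submodule

section PiIntegral

open Submodule Set

variable {ι R : Type*} [Fintype ι] [CommRing R] {A : ι → Type*} [∀ i, CommRing (A i)]
  [∀ i, Algebra R (A i)]

theorem isIntegral_pi_iff {x : ∀ i, A i} : IsIntegral R x ↔ ∀ i, IsIntegral R (x i) := by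
  refine ⟨fun hx i => hx.map (Pi.evalAlgHom R A i), fun hx => ?_⟩
  choose p hmonic hroot using hx
  -- `∏ i, p i` kills every component of `x`.
  refine ⟨∏ i, p i, Polynomial.monic_prod_of_monic _ _ fun i _ => hmonic i, ?_⟩
  rw [← Polynomial.aeval_def]
  funext j
  change Pi.evalAlgHom R A j (Polynomial.aeval x (∏ i, p i)) = 0
  rw [← Polynomial.aeval_algHom_apply, map_prod]
  exact Finset.prod_eq_zero (Finset.mem_univ j) (hroot j)

theorem pi_single_mem_integralClosure [DecidableEq ι] {i : ι} {r : A i}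
    (hr : r ∈ integralClosure R (A i)) : Pi.single i r ∈ integralClosure R (∀ i, A i) := by
  refine isIntegral_pi_iff.2 fun j => ?_
  rcases eq_or_ne j i with rfl | hj
  · rw [Pi.single_eq_same]
    exact hr
  · rw [Pi.single_eq_of_ne hj]
    exact isIntegral_zero

theorem toSubmodule_integralClosure_pi :
    Subalgebra.toSubmodule (integralClosure R (∀ i, A i)) =
      pi univ fun i => Subalgebra.toSubmodule (integralClosure R (A i)) := by
  ext x
  exact isIntegral_pi_iff.trans ⟨fun hx i _ => hx i, fun hx i => hx i trivial⟩

theorem map_proj_integralClosure [DecidableEq ι] (i : ι) :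
    (Subalgebra.toSubmodule (integralClosure R (∀ i, A i))).map (LinearMap.proj i) =
      Subalgebra.toSubmodule (integralClosure R (A i)) := by
  rw [toSubmodule_integralClosure_pi, map_proj_pi]

end PiIntegral

section FracIdeal

variable {Z Q K}

theorem piIdeal_eq_pi (I : ∀ i, Submodule Z (K i)) : piIdeal Z K I = pi Set.univ I := by
  ext x
  exact ⟨fun hx i _ => hx i, fun hx i => hx i trivial⟩

theorem IsFracIdealOf.single_one_mul_mem {J : Submodule Z (∀ i, K i)}
    (hJ : IsFracIdealOf Z Q K (integralClosure Z (∀ i, K i)) J) :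
    ∀ i, ∀ x ∈ J, Pi.single i 1 * x ∈ J :=
  fun _ => hJ.2.2 _ (pi_single_mem_integralClosure (one_mem _))

theorem IsFracIdealOf.map_proj {J : Submodule Z (∀ i, K i)}
    (hJ : IsFracIdealOf Z Q K (integralClosure Z (∀ i, K i)) J) (i : Fin n) :
    IsFracIdealAt Z Q K i (J.map (LinearMap.proj i)) := by
  obtain ⟨hfg, hspan, hstab⟩ := hJ
  refine ⟨hfg.map _, ?_, ?_⟩
  · change span Q (LinearMap.proj (R := Q) (φ := K) i '' J) = ⊤
    rw [span_image, hspan, Submodule.map_top, LinearMap.range_eq_top.2 (LinearMap.proj_surjective i)]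
  · rintro r hr _ ⟨y, hy, rfl⟩
    refine ⟨Pi.single i r * y, hstab _ (pi_single_mem_integralClosure hr) y hy, ?_⟩
    simp

theorem isFracIdealOf_piIdeal {I : ∀ i, Submodule Z (K i)} (hI : ∀ i, IsFracIdealAt Z Q K i (I i)) :
    IsFracIdealOf Z Q K (integralClosure Z (∀ i, K i)) (piIdeal Z K I) := by
  rw [IsFracIdealOf, piIdeal_eq_pi]
  refine ⟨fg_pi fun i => (hI i).1, ?_, fun r hr x hx i _ => ?_⟩
  · rw [coe_pi, span_pi_univ fun i => (I i).zero_mem]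
    simp only [fun i => (hI i).2.1, pi_top]
  · exact (hI i).2.2 (r i) (isIntegral_pi_iff.1 hr i) (x i) (hx i trivial)

end FracIdeal

theorem statement13 :
    (∀ J : Submodule Z (∀ i, K i), IsInvFracIdealO Z Q K J →
      ∀ i, IsInvFracIdealAt Z Q K i (Submodule.map (LinearMap.proj i : (∀ j, K j) →ₗ[Z] K i) J)) ∧
    (∀ J J' : Submodule Z (∀ i, K i), IsInvFracIdealO Z Q K J → IsInvFracIdealO Z Q K J' →
      ∀ i, Submodule.map (LinearMap.proj i : (∀ j, K j) →ₗ[Z] K i) (J * J') =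
        Submodule.map (LinearMap.proj i : (∀ j, K j) →ₗ[Z] K i) J *
        Submodule.map (LinearMap.proj i : (∀ j, K j) →ₗ[Z] K i) J') ∧
    (∀ J J' : Submodule Z (∀ i, K i), IsInvFracIdealO Z Q K J → IsInvFracIdealO Z Q K J' →
      ((∃ lam : ∀ i, K i, IsUnit lam ∧ J = Submodule.map (LinearMap.mulLeft Z lam) J') ↔
        (∀ i, ∃ mu : K i, IsUnit mu ∧
          Submodule.map (LinearMap.proj i : (∀ j, K j) →ₗ[Z] K i) J =
            Submodule.map (LinearMap.mulLeft Z mu)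
              (Submodule.map (LinearMap.proj i : (∀ j, K j) →ₗ[Z] K i) J')))) ∧
    (∀ Jc : ∀ i, Submodule Z (K i), (∀ i, IsInvFracIdealAt Z Q K i (Jc i)) →
      ∃ J : Submodule Z (∀ i, K i), IsInvFracIdealO Z Q K J ∧
        ∀ i, Submodule.map (LinearMap.proj i : (∀ j, K j) →ₗ[Z] K i) J = Jc i) := by
  refine ⟨?_, fun J J' _ _ => map_proj_mul J J', fun J J' hJ hJ' => ⟨?_, ?_⟩, ?_⟩
  · rintro J ⟨hJ, J', hJ', hJJ'⟩ i
    refine ⟨hJ.map_proj i, J'.map (LinearMap.proj i), hJ'.map_proj i, ?_⟩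
    rw [← map_proj_mul, hJJ', map_proj_integralClosure]
  · rintro ⟨lam, hlam, rfl⟩ i
    exact ⟨lam i, hlam.apply i, map_proj_map_mulLeft J' lam i⟩
  · intro h
    choose mu hmu hJmu using h
    refine ⟨mu, Pi.isUnit_iff.2 hmu, ?_⟩
    have hmuJ'stab : ∀ i, ∀ x ∈ J'.map (LinearMap.mulLeft Z mu),
        Pi.single i 1 * x ∈ J'.map (LinearMap.mulLeft Z mu) := by
      rintro i _ ⟨y, hy, rfl⟩
      exact ⟨_, hJ'.1.single_one_mul_mem i y hy, mul_left_comm _ _ _⟩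
    rw [← pi_map_proj_eq_self hJ.1.single_one_mul_mem, ← pi_map_proj_eq_self hmuJ'stab]
    simp only [map_proj_map_mulLeft, hJmu]
  · intro Jc hJc
    choose Jc' hJc' hJcJc' using fun i => (hJc i).2
    refine ⟨piIdeal Z K Jc, ⟨isFracIdealOf_piIdeal fun i => (hJc i).1, piIdeal Z K Jc',
      isFracIdealOf_piIdeal hJc', ?_⟩, fun i => ?_⟩
    · rw [piIdeal_eq_pi, piIdeal_eq_pi, pi_univ_mul_pi_univ, toSubmodule_integralClosure_pi]
      simp only [hJcJc']
    · rw [piIdeal_eq_pi, map_proj_pi]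

end Paper
end
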